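/- Let ℓ, c₁, c₂, c₃, c₇ > 0 be real numbers. Let φ¹ and φ² be the alternating 3-forms on ℝ⁷ given, in terms of the dual basis v¹,…,v⁷ of the standard basis, by φ¹ = √(c₁c₂c₃) v¹∧v²∧v³ + √c₁ v¹∧(ℓ v⁴∧v⁵ + √(c₇ℓ) v⁶∧v⁷) + √c₂ v²∧(ℓ v⁴∧v⁶ − √(c₇ℓ) v⁵∧v⁷) + √c₃ v³∧(−√(c₇ℓ) v⁴∧v⁷ − ℓ v⁵∧v⁶) and φ² = ℓ^{3/2} v⁴∧v⁵∧v⁶ + √ℓ v⁴∧(√(c₇c₁) v⁷∧v¹ + √(c₂c₃) v²∧v³) + √ℓ v⁵∧(√(c₇c₂) v⁷∧v² − √(c₁c₃) v¹∧v³) + √ℓ v⁶∧(−√(c₇c₃) v⁷∧v³ − √(c₁c₂) v¹∧v²). Then there exists ε ∈ {+1, −1} such that for all x, y ∈ ℝ⁷, (i_x φ¹) ∧ (i_y φ¹) ∧ φ¹ = ε · (i_x φ²) ∧ (i_y φ²) ∧ φ². In particular φ¹ and φ² determine the same metric on ℝ⁷ via the formula g(X,Y) dvol = (1/6)(i_X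 φ)∧(i_Y φ)∧φ. -/
import Mathlib

set_option maxHeartbeats 4000000

/-- The basic 1-form `vᶦ` (the `i`-th dual basis vector of `ℝ⁷`), as an element of the exterior
algebra of forms on `ℝ⁷`; wedge product of forms is multiplication in this algebra. -/
noncomputable def v7 (i : Fin 7) : ExteriorAlgebra ℝ (Fin 7 → ℝ) :=
  ExteriorAlgebra.ι ℝ (Pi.single i 1)

/-- The interior product (contraction) `i_x` of forms on `ℝ⁷` with the vector `x ∈ ℝ⁷`. -/
noncomputable def interiorProd (x : Fin 7 → ℝ) :
    ExteriorAlgebra ℝ (Fin 7 → ℝ) →ₗ[ℝ] ExteriorAlgebra ℝ (Fin 7 → ℝ) :=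
  CliffordAlgebra.contractLeft
    (∑ i, x i • (LinearMap.proj i : (Fin 7 → ℝ) →ₗ[ℝ] ℝ))

lemma v7_anticomm (i j : Fin 7) : v7 j * v7 i = -(v7 i * v7 j) :=
  eq_neg_of_add_eq_zero_left (ExteriorAlgebra.ι_add_mul_swap _ _)

lemma v7_sq (i : Fin 7) : v7 i * v7 i = 0 := ExteriorAlgebra.ι_sq_zero _

lemma contract_v7_mul (d : Module.Dual ℝ (Fin 7 → ℝ)) (i : Fin 7)
    (t : ExteriorAlgebra ℝ (Fin 7 → ℝ)) :
    CliffordAlgebra.contractLeft d (v7 i * t)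
      = d (Pi.single i 1) • t - v7 i * CliffordAlgebra.contractLeft d t :=
  CliffordAlgebra.contractLeft_ι_mul _ _ _

lemma contract_v7 (d : Module.Dual ℝ (Fin 7 → ℝ)) (i : Fin 7) :
    CliffordAlgebra.contractLeft d (v7 i) = d (Pi.single i 1) • 1 := by
  rw [v7, CliffordAlgebra.contractLeft_ι, Algebra.algebraMap_eq_smul_one]

lemma v7_sq' (i : Fin 7) (t : ExteriorAlgebra ℝ (Fin 7 → ℝ)) : v7 i * (v7 i * t) = 0 := by
  rw [← mul_assoc, v7_sq, zero_mul]

lemma v7s_1_0 : v7 1 * v7 0 = -(v7 0 * v7 1) := v7_anticomm 0 1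

lemma v7s_1_0' (t : ExteriorAlgebra ℝ (Fin 7 → ℝ)) :
    v7 1 * (v7 0 * t) = -(v7 0 * (v7 1 * t)) := by
  rw [← mul_assoc, v7s_1_0, neg_mul, mul_assoc]

lemma v7s_2_0 : v7 2 * v7 0 = -(v7 0 * v7 2) := v7_anticomm 0 2

lemma v7s_2_0' (t : ExteriorAlgebra ℝ (Fin 7 → ℝ)) :
    v7 2 * (v7 0 * t) = -(v7 0 * (v7 2 * t)) := by
  rw [← mul_assoc, v7s_2_0, neg_mul, mul_assoc]

lemma v7s_3_0 : v7 3 * v7 0 = -(v7 0 * v7 3) := v7_anticomm 0 3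

lemma v7s_3_0' (t : ExteriorAlgebra ℝ (Fin 7 → ℝ)) :
    v7 3 * (v7 0 * t) = -(v7 0 * (v7 3 * t)) := by
  rw [← mul_assoc, v7s_3_0, neg_mul, mul_assoc]

lemma v7s_4_0 : v7 4 * v7 0 = -(v7 0 * v7 4) := v7_anticomm 0 4

lemma v7s_4_0' (t : ExteriorAlgebra ℝ (Fin 7 → ℝ)) :
    v7 4 * (v7 0 * t) = -(v7 0 * (v7 4 * t)) := by
  rw [← mul_assoc, v7s_4_0, neg_mul, mul_assoc]

lemma v7s_5_0 : v7 5 * v7 0 = -(v7 0 * v7 5) := v7_anticomm 0 5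

lemma v7s_5_0' (t : ExteriorAlgebra ℝ (Fin 7 → ℝ)) :
    v7 5 * (v7 0 * t) = -(v7 0 * (v7 5 * t)) := by
  rw [← mul_assoc, v7s_5_0, neg_mul, mul_assoc]

lemma v7s_6_0 : v7 6 * v7 0 = -(v7 0 * v7 6) := v7_anticomm 0 6

lemma v7s_6_0' (t : ExteriorAlgebra ℝ (Fin 7 → ℝ)) :
    v7 6 * (v7 0 * t) = -(v7 0 * (v7 6 * t)) := by
  rw [← mul_assoc, v7s_6_0, neg_mul, mul_assoc]

lemma v7s_2_1 : v7 2 * v7 1 = -(v7 1 * v7 2) := v7_anticomm 1 2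

lemma v7s_2_1' (t : ExteriorAlgebra ℝ (Fin 7 → ℝ)) :
    v7 2 * (v7 1 * t) = -(v7 1 * (v7 2 * t)) := by
  rw [← mul_assoc, v7s_2_1, neg_mul, mul_assoc]

lemma v7s_3_1 : v7 3 * v7 1 = -(v7 1 * v7 3) := v7_anticomm 1 3

lemma v7s_3_1' (t : ExteriorAlgebra ℝ (Fin 7 → ℝ)) :
    v7 3 * (v7 1 * t) = -(v7 1 * (v7 3 * t)) := by
  rw [← mul_assoc, v7s_3_1, neg_mul, mul_assoc]

lemma v7s_4_1 : v7 4 * v7 1 = -(v7 1 * v7 4) := v7_anticomm 1 4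

lemma v7s_4_1' (t : ExteriorAlgebra ℝ (Fin 7 → ℝ)) :
    v7 4 * (v7 1 * t) = -(v7 1 * (v7 4 * t)) := by
  rw [← mul_assoc, v7s_4_1, neg_mul, mul_assoc]

lemma v7s_5_1 : v7 5 * v7 1 = -(v7 1 * v7 5) := v7_anticomm 1 5

lemma v7s_5_1' (t : ExteriorAlgebra ℝ (Fin 7 → ℝ)) :
    v7 5 * (v7 1 * t) = -(v7 1 * (v7 5 * t)) := by
  rw [← mul_assoc, v7s_5_1, neg_mul, mul_assoc]

lemma v7s_6_1 : v7 6 * v7 1 = -(v7 1 * v7 6) := v7_anticomm 1 6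

lemma v7s_6_1' (t : ExteriorAlgebra ℝ (Fin 7 → ℝ)) :
    v7 6 * (v7 1 * t) = -(v7 1 * (v7 6 * t)) := by
  rw [← mul_assoc, v7s_6_1, neg_mul, mul_assoc]

lemma v7s_3_2 : v7 3 * v7 2 = -(v7 2 * v7 3) := v7_anticomm 2 3

lemma v7s_3_2' (t : ExteriorAlgebra ℝ (Fin 7 → ℝ)) :
    v7 3 * (v7 2 * t) = -(v7 2 * (v7 3 * t)) := by
  rw [← mul_assoc, v7s_3_2, neg_mul, mul_assoc]

lemma v7s_4_2 : v7 4 * v7 2 = -(v7 2 * v7 4) := v7_anticomm 2 4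

lemma v7s_4_2' (t : ExteriorAlgebra ℝ (Fin 7 → ℝ)) :
    v7 4 * (v7 2 * t) = -(v7 2 * (v7 4 * t)) := by
  rw [← mul_assoc, v7s_4_2, neg_mul, mul_assoc]

lemma v7s_5_2 : v7 5 * v7 2 = -(v7 2 * v7 5) := v7_anticomm 2 5

lemma v7s_5_2' (t : ExteriorAlgebra ℝ (Fin 7 → ℝ)) :
    v7 5 * (v7 2 * t) = -(v7 2 * (v7 5 * t)) := by
  rw [← mul_assoc, v7s_5_2, neg_mul, mul_assoc]

lemma v7s_6_2 : v7 6 * v7 2 = -(v7 2 * v7 6) := v7_anticomm 2 6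

lemma v7s_6_2' (t : ExteriorAlgebra ℝ (Fin 7 → ℝ)) :
    v7 6 * (v7 2 * t) = -(v7 2 * (v7 6 * t)) := by
  rw [← mul_assoc, v7s_6_2, neg_mul, mul_assoc]

lemma v7s_4_3 : v7 4 * v7 3 = -(v7 3 * v7 4) := v7_anticomm 3 4

lemma v7s_4_3' (t : ExteriorAlgebra ℝ (Fin 7 → ℝ)) :
    v7 4 * (v7 3 * t) = -(v7 3 * (v7 4 * t)) := by
  rw [← mul_assoc, v7s_4_3, neg_mul, mul_assoc]

lemma v7s_5_3 : v7 5 * v7 3 = -(v7 3 * v7 5) := v7_anticomm 3 5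

lemma v7s_5_3' (t : ExteriorAlgebra ℝ (Fin 7 → ℝ)) :
    v7 5 * (v7 3 * t) = -(v7 3 * (v7 5 * t)) := by
  rw [← mul_assoc, v7s_5_3, neg_mul, mul_assoc]

lemma v7s_6_3 : v7 6 * v7 3 = -(v7 3 * v7 6) := v7_anticomm 3 6

lemma v7s_6_3' (t : ExteriorAlgebra ℝ (Fin 7 → ℝ)) :
    v7 6 * (v7 3 * t) = -(v7 3 * (v7 6 * t)) := by
  rw [← mul_assoc, v7s_6_3, neg_mul, mul_assoc]

lemma v7s_5_4 : v7 5 * v7 4 = -(v7 4 * v7 5) := v7_anticomm 4 5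

lemma v7s_5_4' (t : ExteriorAlgebra ℝ (Fin 7 → ℝ)) :
    v7 5 * (v7 4 * t) = -(v7 4 * (v7 5 * t)) := by
  rw [← mul_assoc, v7s_5_4, neg_mul, mul_assoc]

lemma v7s_6_4 : v7 6 * v7 4 = -(v7 4 * v7 6) := v7_anticomm 4 6

lemma v7s_6_4' (t : ExteriorAlgebra ℝ (Fin 7 → ℝ)) :
    v7 6 * (v7 4 * t) = -(v7 4 * (v7 6 * t)) := by
  rw [← mul_assoc, v7s_6_4, neg_mul, mul_assoc]

lemma v7s_6_5 : v7 6 * v7 5 = -(v7 5 * v7 6) := v7_anticomm 5 6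

lemma v7s_6_5' (t : ExteriorAlgebra ℝ (Fin 7 → ℝ)) :
    v7 6 * (v7 5 * t) = -(v7 5 * (v7 6 * t)) := by
  rw [← mul_assoc, v7s_6_5, neg_mul, mul_assoc]

/-- for the two 3-forms `φ¹` and `φ²` on `ℝ⁷` (dual basis indexed here by
`0, …, 6`) defined in the statement, there is a sign `ε ∈ {±1}` such that
`(i_x φ¹)∧(i_y φ¹)∧φ¹ = ε (i_x φ²)∧(i_y φ²)∧φ²` for all `x, y ∈ ℝ⁷`; in particular `φ¹` and
`φ²` determine the same metric on `ℝ⁷`. -/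
theorem statement14 (ℓ c₁ c₂ c₃ c₇ : ℝ) (hℓ : 0 < ℓ) (hc₁ : 0 < c₁) (hc₂ : 0 < c₂)
    (hc₃ : 0 < c₃) (hc₇ : 0 < c₇) :
    ∀ φ₁ φ₂ : ExteriorAlgebra ℝ (Fin 7 → ℝ),
      φ₁ = Real.sqrt (c₁ * c₂ * c₃) • (v7 0 * v7 1 * v7 2)
          + Real.sqrt c₁ • (v7 0 * (ℓ • (v7 3 * v7 4) + Real.sqrt (c₇ * ℓ) • (v7 5 * v7 6)))
          + Real.sqrt c₂ • (v7 1 * (ℓ • (v7 3 * v7 5) - Real.sqrt (c₇ * ℓ) • (v7 4 * v7 6)))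
          + Real.sqrt c₃ •
              (v7 2 * (-(Real.sqrt (c₇ * ℓ) • (v7 3 * v7 6)) - ℓ • (v7 4 * v7 5))) →
      φ₂ = Real.sqrt (ℓ ^ 3) • (v7 3 * v7 4 * v7 5)
          + Real.sqrt ℓ •
              (v7 3 * (Real.sqrt (c₇ * c₁) • (v7 6 * v7 0)
                + Real.sqrt (c₂ * c₃) • (v7 1 * v7 2)))
          + Real.sqrt ℓ •
              (v7 4 * (Real.sqrt (c₇ * c₂) • (v7 6 * v7 1)
                - Real.sqrt (c₁ * c₃) • (v7 0 * v7 2)))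
          + Real.sqrt ℓ •
              (v7 5 * (-(Real.sqrt (c₇ * c₃) • (v7 6 * v7 2))
                - Real.sqrt (c₁ * c₂) • (v7 0 * v7 1))) →
      ∃ ε : ℝ, (ε = 1 ∨ ε = -1) ∧
        ∀ x y : Fin 7 → ℝ,
          interiorProd x φ₁ * interiorProd y φ₁ * φ₁
            = ε • (interiorProd x φ₂ * interiorProd y φ₂ * φ₂) := by
  obtain ⟨l, hl, rfl⟩ : ∃ l, 0 < l ∧ ℓ = l ^ 2 :=
    ⟨Real.sqrt ℓ, Real.sqrt_pos.2 hℓ, (Real.sq_sqrt hℓ.le).symm⟩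
  obtain ⟨a, ha, rfl⟩ : ∃ a, 0 < a ∧ c₁ = a ^ 2 :=
    ⟨Real.sqrt c₁, Real.sqrt_pos.2 hc₁, (Real.sq_sqrt hc₁.le).symm⟩
  obtain ⟨b, hb, rfl⟩ : ∃ b, 0 < b ∧ c₂ = b ^ 2 :=
    ⟨Real.sqrt c₂, Real.sqrt_pos.2 hc₂, (Real.sq_sqrt hc₂.le).symm⟩
  obtain ⟨c, hc, rfl⟩ : ∃ c, 0 < c ∧ c₃ = c ^ 2 :=
    ⟨Real.sqrt c₃, Real.sqrt_pos.2 hc₃, (Real.sq_sqrt hc₃.le).symm⟩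
  obtain ⟨g, hg, rfl⟩ : ∃ g, 0 < g ∧ c₇ = g ^ 2 :=
    ⟨Real.sqrt c₇, Real.sqrt_pos.2 hc₇, (Real.sq_sqrt hc₇.le).symm⟩
  intro φ₁ φ₂ hφ₁ hφ₂
  have e1 : Real.sqrt (a ^ 2 * b ^ 2 * c ^ 2) = a * b * c := by
    rw [show a ^ 2 * b ^ 2 * c ^ 2 = (a * b * c) ^ 2 by ring, Real.sqrt_sq (by positivity)]
  have e2 : Real.sqrt (a ^ 2) = a := Real.sqrt_sq ha.le
  have e3 : Real.sqrt (b ^ 2) = b := Real.sqrt_sq hb.le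
  have e4 : Real.sqrt (c ^ 2) = c := Real.sqrt_sq hc.le
  have e5 : Real.sqrt (g ^ 2 * l ^ 2) = g * l := by
    rw [show g ^ 2 * l ^ 2 = (g * l) ^ 2 by ring, Real.sqrt_sq (by positivity)]
  have e6 : Real.sqrt ((l ^ 2) ^ 3) = l ^ 3 := by
    rw [show (l ^ 2) ^ 3 = (l ^ 3) ^ 2 by ring, Real.sqrt_sq (by positivity)]
  have e7 : Real.sqrt (l ^ 2) = l := Real.sqrt_sq hl.le
  have e8 : Real.sqrt (g ^ 2 * a ^ 2) = g * a := by
    rw [show g ^ 2 * a ^ 2 = (g * a) ^ 2 by ring, Real.sqrt_sq (by positivity)]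
  have e9 : Real.sqrt (b ^ 2 * c ^ 2) = b * c := by
    rw [show b ^ 2 * c ^ 2 = (b * c) ^ 2 by ring, Real.sqrt_sq (by positivity)]
  have e10 : Real.sqrt (g ^ 2 * b ^ 2) = g * b := by
    rw [show g ^ 2 * b ^ 2 = (g * b) ^ 2 by ring, Real.sqrt_sq (by positivity)]
  have e11 : Real.sqrt (a ^ 2 * c ^ 2) = a * c := by
    rw [show a ^ 2 * c ^ 2 = (a * c) ^ 2 by ring, Real.sqrt_sq (by positivity)]
  have e12 : Real.sqrt (g ^ 2 * c ^ 2) = g * c := by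
    rw [show g ^ 2 * c ^ 2 = (g * c) ^ 2 by ring, Real.sqrt_sq (by positivity)]
  have e13 : Real.sqrt (a ^ 2 * b ^ 2) = a * b := by
    rw [show a ^ 2 * b ^ 2 = (a * b) ^ 2 by ring, Real.sqrt_sq (by positivity)]
  rw [e1, e2, e3, e4, e5] at hφ₁
  rw [e6, e7, e8, e9, e10, e11, e12, e13] at hφ₂
  subst hφ₁ hφ₂
  refine ⟨1, Or.inl rfl, fun x y => ?_⟩
  have key : ∀ z : Fin 7 → ℝ, ∀ i : Fin 7,
      (∑ j, z j • (LinearMap.proj j : (Fin 7 → ℝ) →ₗ[ℝ] ℝ)) (Pi.single i 1) = z i := by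
    intro z i
    simp [LinearMap.proj_apply, Pi.single_apply, Finset.sum_ite_eq', mul_comm]
  simp only [interiorProd, map_add, map_smul, map_sub, map_neg, mul_assoc,
    contract_v7_mul, contract_v7, key]
  simp only [one_smul, smul_add, smul_sub, smul_neg, smul_smul, mul_add, add_mul, mul_sub,
    sub_mul, mul_neg, neg_mul, neg_neg, smul_mul_assoc, mul_smul_comm, mul_one, one_mul,
    mul_assoc, v7_sq, v7_sq', v7s_1_0, v7s_1_0', v7s_2_0, v7s_2_0', v7s_3_0, v7s_3_0', v7s_4_0, v7s_4_0', v7s_5_0, v7s_5_0', v7s_6_0, v7s_6_0', v7s_2_1, v7s_2_1', v7s_3_1, v7s_3_1', v7s_4_1, v7s_4_1', v7s_5_1, v7s_5_1', v7s_6_1, v7s_6_1', v7s_3_2, v7s_3_2', v7s_4_2, v7s_4_2', v7s_5_2, v7s_5_2', v7s_6_2, v7s_6_2', v7s_4_3, v7s_4_3', v7s_5_3, v7s_5_3', v7s_6_3, v7s_6_3', v7s_5_4, v7s_5_4', v7s_6_4, v7s_6_4', v7s_6_5, v7s_6_5',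
    mul_zero, zero_mul, smul_zero, neg_zero, add_zero, zero_add, sub_zero, zero_sub]
  module
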